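/- Let n ≥ 4 be an integer, let u be a smooth function on an open subset of ℝ^{n+1}, and let x denote a Cartesian coordinate function x_i (so ∇x = e_i is constant). Then pointwise the commutator [L₄, x](u,u,u) := (1/3)·(d/dt)|_{t=0} L₄(u + t·x·u) − x·L₄(u) satisfies [L₄, x](u,u,u) = (8/(3(n−3)))·( T₁(u)(∇u, ∇x) − (n/2)·σ₁(u)·⟨∇u, ∇x⟩ ); equivalently, it equals ((n−2)/3)·u·⟨∇u,∇x⟩·Δu + (n/3)·|∇u|²·⟨∇u,∇x⟩ + (1/3)·u·⟨∇x, ∇(|∇u|²)⟩. -/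

import Mathlib

open MeasureTheory Metric

noncomputable section

local notation "⟪" x ", " y "⟫" => @inner ℝ _ _ x y

abbrev Euc (m : ℕ) : Type := EuclideanSpace ℝ (Fin m)

variable {m : ℕ}

def stdv (m : ℕ) (i : Fin m) : Euc m := EuclideanSpace.single i (1 : ℝ)

def grad (u : Euc m → ℝ) (x : Euc m) : Euc m := gradient u x

def hessVec (u : Euc m → ℝ) (x v : Euc m) : Euc m := fderiv ℝ (gradient u) x v

def hess (u : Euc m → ℝ) (x v w : Euc m) : ℝ := ⟪hessVec u x v, w⟫

def lap (u : Euc m → ℝ) (x : Euc m) : ℝ := ∑ i, hess u x (stdv m i) (stdv m i)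

def hessNormSq (u : Euc m → ℝ) (x : Euc m) : ℝ :=
  ∑ i, ∑ j, (hess u x (stdv m i) (stdv m j)) ^ 2

def divg (V : Euc m → Euc m) (x : Euc m) : ℝ :=
  ∑ i, fderiv ℝ (fun y => V y i) x (stdv m i)

def etaD (u : Euc m → ℝ) (x : Euc m) : ℝ := ⟪x, grad u x⟫

def tgrad (u : Euc m → ℝ) (x : Euc m) : Euc m := grad u x - etaD u x • x

def SmoothNearBall (u : Euc m → ℝ) : Prop :=
  ∃ U : Set (Euc m), IsOpen U ∧ closedBall (0 : Euc m) 1 ⊆ U ∧ ContDiffOn ℝ (⊤ : ℕ∞) u U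

/-- boundary Laplacian on the unit sphere `Sⁿ ⊂ ℝⁿ⁺¹` -/
def blap (n : ℕ) (u : Euc (n+1) → ℝ) (x : Euc (n+1)) : ℝ :=
  lap u x - (n : ℝ) * etaD u x - hess u x x x

def sigma1 (n : ℕ) (u : Euc (n+1) → ℝ) (x : Euc (n+1)) : ℝ :=
  -(((n:ℝ)-3)/4) * u x * lap u x - (((n:ℝ)+1)/4) * ‖grad u x‖^2

/-- the tensor `T₁(u)` as a bilinear form -/
def T1b (n : ℕ) (u : Euc (n+1) → ℝ) (x v w : Euc (n+1)) : ℝ :=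
  (sigma1 n u x + (1/2) * ‖grad u x‖^2) * ⟪v, w⟫
    + (((n:ℝ)-3)/4) * u x * hess u x v w
    - (((n:ℝ)+1)/4) * ⟪grad u x, v⟫ * ⟪grad u x, w⟫

/-- the tensor `T₁(u)` applied to a vector, i.e. the vector `T₁(u)(·,X)` -/
def T1app (n : ℕ) (u : Euc (n+1) → ℝ) (x X : Euc (n+1)) : Euc (n+1) :=
  (sigma1 n u x + (1/2) * ‖grad u x‖^2) • X
    + ((((n:ℝ)-3)/4) * u x) • hessVec u x X
    - ((((n:ℝ)+1)/4) * ⟪grad u x, X⟫) • grad u x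

def Hb (n : ℕ) (u : Euc (n+1) → ℝ) (x : Euc (n+1)) : ℝ :=
  etaD u x + (((n:ℝ)-3)/4) * u x

def L4 (n : ℕ) (u : Euc (n+1) → ℝ) (x : Euc (n+1)) : ℝ :=
  (((n:ℝ)-3)/8) * u x * (lap u x)^2 - (((n:ℝ)-3)/8) * u x * hessNormSq u x
    + (((n:ℝ)-1)/4) * ‖grad u x‖^2 * lap u x
    + (((n:ℝ)+1)/4) * hess u x (grad u x) (grad u x)

def B3 (n : ℕ) (u : Euc (n+1) → ℝ) (x : Euc (n+1)) : ℝ :=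
  Hb n u x * T1b n u x x x + ((n:ℝ)/3) * (Hb n u x)^3

def E2 (n : ℕ) (u : Euc (n+1) → ℝ) : ℝ :=
  (∫ x in closedBall (0 : Euc (n+1)) 1, u x * L4 n u x)
    + ∫ x in sphere (0 : Euc (n+1)) 1, u x * B3 n u x ∂μH[(n:ℝ)]

/-- total surface measure of the sphere `Sⁿ ⊂ ℝⁿ⁺¹` -/
def omegaN (n : ℕ) : ℝ := (μH[(n:ℝ)] (sphere (0 : Euc (n+1)) 1)).toReal

def memC1 (n : ℕ) (u : Euc (n+1) → ℝ) : Prop :=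
  SmoothNearBall u ∧ (∀ x ∈ closedBall (0 : Euc (n+1)) 1, 0 ≤ sigma1 n u x)
    ∧ ∀ x ∈ sphere (0 : Euc (n+1)) 1, 0 < Hb n u x

def memV (n : ℕ) (u : Euc (n+1) → ℝ) : Prop :=
  SmoothNearBall u ∧ (∀ x ∈ closedBall (0 : Euc (n+1)) 1, 0 < u x)
    ∧ (∫ x in sphere (0 : Euc (n+1)) 1, u x ^ ((4*(n:ℝ))/((n:ℝ)-3)) ∂μH[(n:ℝ)]) = omegaN n

/-- the normalized path `u_t` through `u` in the direction `v` -/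
def pathU (n : ℕ) (u v : Euc (n+1) → ℝ) (t : ℝ) : Euc (n+1) → ℝ :=
  fun x => omegaN n ^ (((n:ℝ)-3)/(4*(n:ℝ)))
    * ((∫ y in sphere (0 : Euc (n+1)) 1,
          |(1 + t * v y) * u y| ^ ((4*(n:ℝ))/((n:ℝ)-3)) ∂μH[(n:ℝ)]) ^ (((n:ℝ)-3)/(4*(n:ℝ))))⁻¹
    * ((1 + t * v x) * u x)

/-- `u` is a local minimizer of `E₂ : V → ℝ` -/
def IsLocalMinE2 (n : ℕ) (u : Euc (n+1) → ℝ) : Prop :=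
  ∀ v : Euc (n+1) → ℝ, SmoothNearBall v →
    IsLocalMin (fun t : ℝ => E2 n (pathU n u v t)) 0

/-- the polarization `L₄(w,u,u)` -/
def L4pol (n : ℕ) (u w : Euc (n+1) → ℝ) (x : Euc (n+1)) : ℝ :=
  (1/3) * deriv (fun t : ℝ => L4 n (fun y => u y + t * w y) x) 0

/-- the polarization `B₃(w,u,u)` -/
def B3pol (n : ℕ) (u w : Euc (n+1) → ℝ) (x : Euc (n+1)) : ℝ :=
  (1/3) * deriv (fun t : ℝ => B3 n (fun y => u y + t * w y) x) 0

/- ### four-dimensional (critical) objects -/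

def L43 (u v w : Euc 4 → ℝ) (x : Euc 4) : ℝ :=
  divg (fun y => ⟪grad u y, grad v y⟫ • grad w y
    + ⟪grad u y, grad w y⟫ • grad v y
    + ⟪grad v y, grad w y⟫ • grad u y) x

def L42 (u v : Euc 4 → ℝ) (x : Euc 4) : ℝ :=
  -(1/2) * (lap (fun y => ⟪grad u y, grad v y⟫) x
    - divg (fun y => lap u y • grad v y + lap v y • grad u y) x)

def B33 (u v w : Euc 4 → ℝ) (x : Euc 4) : ℝ :=
  -(⟪grad u x, grad v x⟫ * etaD w x + ⟪grad u x, grad w x⟫ * etaD v x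
    + ⟪grad v x, grad w x⟫ * etaD u x)

def B32 (u v : Euc 4 → ℝ) (x : Euc 4) : ℝ :=
  -(blap 3 u x * etaD v x + blap 3 v x * etaD u x)
    - ⟪tgrad u x, tgrad v x⟫ - 3 * etaD u x * etaD v x

def B31 (u : Euc 4 → ℝ) (x : Euc 4) : ℝ := -(blap 3 u x)

/-- total surface measure of `S³ ⊂ ℝ⁴` -/
def omega3 : ℝ := (μH[(3:ℝ)] (sphere (0 : Euc 4) 1)).toReal

def F2 (u : Euc 4 → ℝ) : ℝ :=
  -(1/4) * (∫ x in closedBall (0 : Euc 4) 1,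
      ((1/2) * ‖grad u x‖^4 + ‖grad u x‖^2 * lap u x))
    + ∫ x in sphere (0 : Euc 4) 1,
      ((1/4) * ‖tgrad u x‖^2 * etaD u x + (1/12) * (etaD u x)^3
        + (1/2) * ‖tgrad u x‖^2 + u x) ∂μH[(3:ℝ)]

def G2 (u : Euc 4 → ℝ) : ℝ :=
  F2 u - (omega3/3) * Real.log
    ((∫ x in sphere (0 : Euc 4) 1, Real.exp (3 * u x) ∂μH[(3:ℝ)]) / omega3)

def memC1crit (u : Euc 4 → ℝ) : Prop :=
  SmoothNearBall u ∧ (∀ x ∈ closedBall (0 : Euc 4) 1, 0 ≤ -lap u x - ‖grad u x‖^2)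
    ∧ ∀ x ∈ sphere (0 : Euc 4) 1, 0 < etaD u x + 1

/-- `u` is a local minimizer of `G₂ : C^∞(B) → ℝ` -/
def IsLocalMinG2 (u : Euc 4 → ℝ) : Prop :=
  ∀ v : Euc 4 → ℝ, SmoothNearBall v →
    IsLocalMin (fun t : ℝ => G2 (fun x => u x + t * v x)) 0

/-- the critical (four-dimensional) `σ₁` -/
def sigma1c (u : Euc 4 → ℝ) (x : Euc 4) : ℝ := -lap u x - ‖grad u x‖^2

/-- the critical (four-dimensional) `T₁(u)` as a bilinear form -/
def T1c (u : Euc 4 → ℝ) (x v w : Euc 4) : ℝ :=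
  hess u x v w - ⟪grad u x, v⟫ * ⟪grad u x, w⟫
    - (lap u x + (1/2) * ‖grad u x‖^2) * ⟪v, w⟫



/- ### auxiliary material for statement14 -/

def QWe (n : ℕ) (u : Euc (n+1) → ℝ) (p : Euc (n+1)) (i : Fin (n+1)) : ℝ :=
  ∑ j, ∑ l, (fderiv ℝ u p (stdv (n+1) j) * (stdv (n+1) l) i
    + (stdv (n+1) j) i * fderiv ℝ u p (stdv (n+1) l)
    + p i * hess u p (stdv (n+1) j) (stdv (n+1) l)) ^ 2

lemma aux_inner_grad (f : Euc m → ℝ) (y v : Euc m) : ⟪gradient f y, v⟫ = fderiv ℝ f y v :=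
  InnerProductSpace.toDual_symm_apply

lemma aux_sum_coord (v : Euc m) : ∑ j, v j • stdv m j = v := by
  simpa [stdv, EuclideanSpace.basisFun_apply] using
    (EuclideanSpace.basisFun (Fin m) ℝ).sum_repr v

lemma aux_hess_sum_left (f : Euc m → ℝ) (x w v : Euc m) :
    hess f x v w = ∑ j, v j * hess f x (stdv m j) w := by
  conv_lhs => rw [← aux_sum_coord v]
  simp only [hess, hessVec, map_sum, _root_.map_smul, sum_inner, real_inner_smul_left, smul_eq_mul]

lemma aux_hess_sum_right (f : Euc m → ℝ) (x w v : Euc m) :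
    hess f x w v = ∑ j, v j * hess f x w (stdv m j) := by
  conv_lhs => rw [← aux_sum_coord v]
  simp only [hess, inner_sum, real_inner_smul_right, smul_eq_mul]

lemma aux_hess_add_left (f : Euc m → ℝ) (x a b w : Euc m) :
    hess f x (a + b) w = hess f x a w + hess f x b w := by
  simp only [hess, hessVec, _root_.map_add, inner_add_left]

lemma aux_hess_smul_left (f : Euc m → ℝ) (x : Euc m) (r : ℝ) (a w : Euc m) :
    hess f x (r • a) w = r * hess f x a w := by
  simp only [hess, hessVec, _root_.map_smul, real_inner_smul_left, smul_eq_mul]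

lemma aux_hess_add_right (f : Euc m → ℝ) (x w a b : Euc m) :
    hess f x w (a + b) = hess f x w a + hess f x w b := by
  simp only [hess, inner_add_right]

lemma aux_hess_smul_right (f : Euc m → ℝ) (x w : Euc m) (r : ℝ) (a : Euc m) :
    hess f x w (r • a) = r * hess f x w a := by
  simp only [hess, real_inner_smul_right]

lemma aux_sum_mul_stdv (f : Fin m → ℝ) (i : Fin m) : ∑ j, f j * (stdv m j) i = f i := by
  simp [stdv, EuclideanSpace.single_apply, mul_ite, Finset.sum_ite_eq]

lemma aux_stdv_mul_sum (f : Fin m → ℝ) (i : Fin m) : ∑ j, (stdv m j) i * f j = f i := by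
  simp [stdv, EuclideanSpace.single_apply, ite_mul, Finset.sum_ite_eq]

lemma aux_sum_sq_expand1 (s : ℝ) (f1 f2 : Fin m → ℝ) :
    ∑ l, (f1 l + s * f2 l) ^ 2
      = (∑ l, f1 l ^ 2) + s * (2 * ∑ l, f1 l * f2 l) + s ^ 2 * ∑ l, f2 l ^ 2 := by
  have h : ∀ l, (f1 l + s * f2 l) ^ 2
      = f1 l ^ 2 + (s * (2 * (f1 l * f2 l)) + s ^ 2 * f2 l ^ 2) := fun l => by ring
  rw [Finset.sum_congr rfl fun l _ => h l, Finset.sum_add_distrib, Finset.sum_add_distrib]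
  simp only [← Finset.mul_sum]
  ring

lemma aux_sum_sq_expand2 (s : ℝ) (F1 F2 : Fin m → Fin m → ℝ) :
    ∑ j, ∑ l, (F1 j l + s * F2 j l) ^ 2
      = (∑ j, ∑ l, F1 j l ^ 2) + s * (2 * ∑ j, ∑ l, F1 j l * F2 j l)
        + s ^ 2 * ∑ j, ∑ l, F2 j l ^ 2 := by
  have h : ∀ j, ∑ l, (F1 j l + s * F2 j l) ^ 2
      = (∑ l, F1 j l ^ 2) + (s * (2 * ∑ l, F1 j l * F2 j l)
        + s ^ 2 * ∑ l, F2 j l ^ 2) := fun j => by rw [aux_sum_sq_expand1]; ring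
  rw [Finset.sum_congr rfl fun j _ => h j, Finset.sum_add_distrib, Finset.sum_add_distrib]
  simp only [← Finset.mul_sum]
  ring

lemma aux_deriv_cubic (A B C D : ℝ) :
    deriv (fun s : ℝ => A + B * s + C * s ^ 2 + D * s ^ 3) 0 = B := by
  have h : HasDerivAt (fun s : ℝ => A + B * s + C * s ^ 2 + D * s ^ 3)
      (0 + B * 1 + C * ((2 : ℕ) * (0:ℝ) ^ (2 - 1)) + D * ((3 : ℕ) * (0:ℝ) ^ (3 - 1))) 0 := by
    exact (((hasDerivAt_const (0:ℝ) A).add ((hasDerivAt_id (0:ℝ)).const_mul B)).add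
      ((hasDerivAt_pow 2 (0:ℝ)).const_mul C)).add ((hasDerivAt_pow 3 (0:ℝ)).const_mul D)
  rw [h.deriv]
  norm_num

set_option maxHeartbeats 2000000 in
/-- the commutator `[L₄, xⁱ](u,u,u)`. -/
theorem statement14 (n : ℕ) (hn : 4 ≤ n) (U : Set (Euc (n+1))) (hU : IsOpen U)
    (u : Euc (n+1) → ℝ) (hu : ContDiffOn ℝ (⊤ : ℕ∞) u U) (i : Fin (n+1))
    (p : Euc (n+1)) (hp : p ∈ U) :
    ((1/3) * deriv (fun s : ℝ => L4 n (fun y => u y + s * (y i * u y)) p) 0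
          - p i * L4 n u p
        = (8/(3*((n:ℝ)-3))) * (T1b n u p (grad u p) (stdv (n+1) i)
            - ((n:ℝ)/2) * sigma1 n u p * ⟪grad u p, stdv (n+1) i⟫))
      ∧ ((1/3) * deriv (fun s : ℝ => L4 n (fun y => u y + s * (y i * u y)) p) 0
          - p i * L4 n u p
        = (((n:ℝ)-2)/3) * u p * ⟪grad u p, stdv (n+1) i⟫ * lap u p
          + ((n:ℝ)/3) * ‖grad u p‖^2 * ⟪grad u p, stdv (n+1) i⟫
          + (1/3) * u p * ⟪stdv (n+1) i, grad (fun y => ‖grad u y‖^2) p⟫) := by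
  classical
  have hU' : U ∈ nhds p := hU.mem_nhds hp
  have hcp : ContDiffAt ℝ (⊤ : ℕ∞) u p := hu.contDiffAt hU'
  have hdiff : ∀ y ∈ U, DifferentiableAt ℝ u y := fun y hy =>
    (hu.differentiableOn (by simp)).differentiableAt (hU.mem_nhds hy)
  -- differentiability of the gradient
  have hfd : DifferentiableAt ℝ (fderiv ℝ u) p :=
    (hcp.fderiv_right (m := 1) (WithTop.coe_le_coe.mpr le_top)).differentiableAt one_ne_zero
  have hdjy : ∀ (y : Euc (n+1)) (j : Fin (n+1)),
      fderiv ℝ u y (stdv (n+1) j) = gradient u y j := by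
    intro y j
    rw [← aux_inner_grad]
    simp only [stdv, EuclideanSpace.inner_single_right]; simp
  have hGrepr : gradient u
      = fun y => ∑ j, fderiv ℝ u y (stdv (n+1) j) • stdv (n+1) j := by
    funext y
    conv_lhs => rw [← aux_sum_coord (gradient u y)]
    exact Finset.sum_congr rfl fun j _ => by rw [hdjy y j]
  have hfG : HasFDerivAt (gradient u)
      (∑ j, ((ContinuousLinearMap.apply ℝ ℝ (stdv (n+1) j)).comp
        (fderiv ℝ (fderiv ℝ u) p)).smulRight (stdv (n+1) j)) p := by
    rw [hGrepr]
    exact HasFDerivAt.fun_sum fun j _ =>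
      ((ContinuousLinearMap.apply ℝ ℝ (stdv (n+1) j)).hasFDerivAt.comp p
        hfd.hasFDerivAt).smul_const (stdv (n+1) j)
  have hGdiff : DifferentiableAt ℝ (gradient u) p := hfG.differentiableAt
  have hessVecEq : ∀ X : Euc (n+1), hessVec u p X
      = ∑ j, (fderiv ℝ (fderiv ℝ u) p X (stdv (n+1) j)) • stdv (n+1) j := by
    intro X
    simp only [hessVec]
    rw [hfG.fderiv]
    simp only [ContinuousLinearMap.sum_apply, ContinuousLinearMap.smulRight_apply,
      ContinuousLinearMap.coe_comp', Function.comp_apply, ContinuousLinearMap.apply_apply]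
  have hbasis : ∀ j k : Fin (n+1), hess u p (stdv (n+1) j) (stdv (n+1) k)
      = fderiv ℝ (fderiv ℝ u) p (stdv (n+1) j) (stdv (n+1) k) := by
    intro j k
    simp only [hess, hessVecEq, sum_inner, real_inner_smul_left]
    rw [Finset.sum_congr rfl fun l (_ : l ∈ Finset.univ) => by
      rw [show ⟪stdv (n+1) l, stdv (n+1) k⟫ = ((stdv (n+1) l) k : ℝ) from by
        simp [stdv, EuclideanSpace.inner_single_left]; exact if_congr eq_comm rfl rfl]]
    exact aux_sum_mul_stdv (fun l => fderiv ℝ (fderiv ℝ u) p (stdv (n+1) j) (stdv (n+1) l)) k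
  -- symmetry of the Hessian
  have hesssym : ∀ X Y : Euc (n+1), hess u p X Y = hess u p Y X := by
    have hsy : IsSymmSndFDerivAt ℝ u p := hcp.isSymmSndFDerivAt (by rw [minSmoothness_of_isRCLikeNormedField]; exact WithTop.coe_le_coe.mpr le_top)
    intro X Y
    rw [aux_hess_sum_left u p Y X, aux_hess_sum_left u p X Y,
      Finset.sum_congr rfl fun j (_ : j ∈ Finset.univ) => by
        rw [aux_hess_sum_right u p (stdv (n+1) j) Y]]
    conv_rhs => rw [Finset.sum_congr rfl fun j (_ : j ∈ Finset.univ) => by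
      rw [aux_hess_sum_right u p (stdv (n+1) j) X]]
    simp only [Finset.mul_sum]
    rw [Finset.sum_comm]
    exact Finset.sum_congr rfl fun a _ => Finset.sum_congr rfl fun b _ => by
      rw [hbasis b a, hsy (stdv (n+1) b) (stdv (n+1) a), ← hbasis a b]; ring
  -- the gradient of the perturbed function
  have hgrad : ∀ (s : ℝ), ∀ y ∈ U, HasGradientAt (fun z => u z + s * (z i * u z))
      (gradient u y + (s * u y) • stdv (n+1) i + (s * y i) • gradient u y) y := by
    intro s y hy
    have h1 : HasFDerivAt u (fderiv ℝ u y) y := (hdiff y hy).hasFDerivAt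
    have hproj : HasFDerivAt (fun z : Euc (n+1) => z i)
        (EuclideanSpace.proj i : Euc (n+1) →L[ℝ] ℝ) y :=
      (EuclideanSpace.proj i : Euc (n+1) →L[ℝ] ℝ).hasFDerivAt
    have h2 := hproj.fun_mul h1
    have h3 := h1.fun_add (h2.const_mul s)
    rw [hasGradientAt_iff_hasFDerivAt]
    refine h3.congr_fderiv ?_
    refine ContinuousLinearMap.ext fun v => ?_
    simp only [InnerProductSpace.toDual_apply_apply, inner_add_left, real_inner_smul_left,
      aux_inner_grad, ContinuousLinearMap.add_apply, ContinuousLinearMap.coe_smul',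
      Pi.smul_apply, smul_eq_mul, stdv, EuclideanSpace.inner_single_left, map_one, one_mul,
      PiLp.proj_apply]
    ring
  have hgradeq : ∀ (s : ℝ), ∀ y ∈ U, gradient (fun z => u z + s * (z i * u z)) y
      = gradient u y + (s * u y) • stdv (n+1) i + (s * y i) • gradient u y :=
    fun s y hy => (hgrad s y hy).gradient
  -- the Hessian of the perturbed function
  have hhv : ∀ (s : ℝ) (X : Euc (n+1)), hessVec (fun z => u z + s * (z i * u z)) p X
      = hessVec u p X + (s * fderiv ℝ u p X) • stdv (n+1) i + (s * X i) • gradient u p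
        + (s * p i) • hessVec u p X := by
    intro s X
    have hev : gradient (fun z => u z + s * (z i * u z)) =ᶠ[nhds p]
        (fun y => gradient u y + (s * u y) • stdv (n+1) i + (s * y i) • gradient u y) :=
      Filter.eventuallyEq_of_mem hU' (fun y hy => hgradeq s y hy)
    have h1 : HasFDerivAt (gradient u) (fderiv ℝ (gradient u) p) p := hGdiff.hasFDerivAt
    have h2 : HasFDerivAt (fun y : Euc (n+1) => (s * u y) • stdv (n+1) i)
        ((s • fderiv ℝ u p).smulRight (stdv (n+1) i)) p :=
      ((hdiff p hp).hasFDerivAt.const_mul s).smul_const (stdv (n+1) i)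
    have hproj : HasFDerivAt (fun z : Euc (n+1) => z i)
        (EuclideanSpace.proj i : Euc (n+1) →L[ℝ] ℝ) p :=
      (EuclideanSpace.proj i : Euc (n+1) →L[ℝ] ℝ).hasFDerivAt
    have h3 : HasFDerivAt (fun y : Euc (n+1) => (s * y i) • gradient u y)
        ((s * p i) • fderiv ℝ (gradient u) p
          + ((s • (EuclideanSpace.proj i : Euc (n+1) →L[ℝ] ℝ))).smulRight (gradient u p)) p :=
      (hproj.const_mul s).smul h1
    have h4 := (h1.fun_add h2).fun_add h3
    simp only [hessVec]
    rw [hev.fderiv_eq, h4.fderiv]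
    simp only [ContinuousLinearMap.add_apply, ContinuousLinearMap.coe_smul',
      Pi.smul_apply, ContinuousLinearMap.smulRight_apply, PiLp.proj_apply,
      smul_eq_mul]
    module
  have hh : ∀ (s : ℝ) (X Y : Euc (n+1)), hess (fun z => u z + s * (z i * u z)) p X Y
      = hess u p X Y + s * (fderiv ℝ u p X * Y i + X i * fderiv ℝ u p Y
        + p i * hess u p X Y) := by
    intro s X Y
    simp only [hess, hhv s X, inner_add_left, real_inner_smul_left]
    rw [show ⟪stdv (n+1) i, Y⟫ = Y i from by
      simp [stdv, EuclideanSpace.inner_single_left], aux_inner_grad]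
    ring
  -- coordinate facts
  have hdj : ∀ j : Fin (n+1), fderiv ℝ u p (stdv (n+1) j) = gradient u p j := by
    intro j
    rw [← aux_inner_grad]
    simp only [stdv, EuclideanSpace.inner_single_right]; simp
  have hge : ⟪gradient u p, stdv (n+1) i⟫ = fderiv ℝ u p (stdv (n+1) i) :=
    aux_inner_grad u p _
  have heg : ⟪stdv (n+1) i, gradient u p⟫ = fderiv ℝ u p (stdv (n+1) i) := by
    rw [real_inner_comm]; exact aux_inner_grad u p _
  have hee1 : ⟪stdv (n+1) i, stdv (n+1) i⟫ = (1:ℝ) := by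
    simp [stdv, EuclideanSpace.inner_single_left, EuclideanSpace.single_apply]
  have hdg : fderiv ℝ u p (gradient u p) = ‖gradient u p‖ ^ 2 := by
    rw [← aux_inner_grad, real_inner_self_eq_norm_sq]
  have hgi : gradient u p i = fderiv ℝ u p (stdv (n+1) i) := by
    rw [← aux_inner_grad]
    simp only [stdv, EuclideanSpace.inner_single_right]; simp
  have hei : stdv (n+1) i i = (1:ℝ) := by simp [stdv]
  -- the Laplacian of the perturbed function
  have hlap : ∀ s : ℝ, lap (fun z => u z + s * (z i * u z)) p
      = lap u p + s * (2 * fderiv ℝ u p (stdv (n+1) i) + p i * lap u p) := by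
    intro s
    simp only [lap, hh]
    rw [Finset.sum_add_distrib, ← Finset.mul_sum]
    congr 2
    rw [Finset.sum_add_distrib, Finset.sum_add_distrib, ← Finset.mul_sum,
      aux_sum_mul_stdv (fun j => fderiv ℝ u p (stdv (n+1) j)) i,
      aux_stdv_mul_sum (fun j => fderiv ℝ u p (stdv (n+1) j)) i]
    ring
  -- the squared Hessian norm of the perturbed function
  have hhns : ∀ s : ℝ, hessNormSq (fun z => u z + s * (z i * u z)) p
      = hessNormSq u p + s * (2 * (2 * hess u p (gradient u p) (stdv (n+1) i)
        + p i * hessNormSq u p)) + s ^ 2 * QWe n u p i := by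
    intro s
    simp only [hessNormSq, hh, QWe]
    rw [aux_sum_sq_expand2 s (fun j l => hess u p (stdv (n+1) j) (stdv (n+1) l))
      (fun j l => fderiv ℝ u p (stdv (n+1) j) * (stdv (n+1) l) i
        + (stdv (n+1) j) i * fderiv ℝ u p (stdv (n+1) l)
        + p i * hess u p (stdv (n+1) j) (stdv (n+1) l))]
    have inner_eq : ∀ j : Fin (n+1),
        ∑ l, hess u p (stdv (n+1) j) (stdv (n+1) l)
          * (fderiv ℝ u p (stdv (n+1) j) * (stdv (n+1) l) i
            + (stdv (n+1) j) i * fderiv ℝ u p (stdv (n+1) l)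
            + p i * hess u p (stdv (n+1) j) (stdv (n+1) l))
        = fderiv ℝ u p (stdv (n+1) j) * hess u p (stdv (n+1) j) (stdv (n+1) i)
          + (stdv (n+1) j) i
            * (∑ l, fderiv ℝ u p (stdv (n+1) l) * hess u p (stdv (n+1) j) (stdv (n+1) l))
          + p i * ∑ l, hess u p (stdv (n+1) j) (stdv (n+1) l) ^ 2 := by
      intro j
      have e1 : ∀ l, hess u p (stdv (n+1) j) (stdv (n+1) l)
          * (fderiv ℝ u p (stdv (n+1) j) * (stdv (n+1) l) i
            + (stdv (n+1) j) i * fderiv ℝ u p (stdv (n+1) l)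
            + p i * hess u p (stdv (n+1) j) (stdv (n+1) l))
          = (fderiv ℝ u p (stdv (n+1) j) * hess u p (stdv (n+1) j) (stdv (n+1) l))
              * (stdv (n+1) l) i
            + (stdv (n+1) j) i
              * (fderiv ℝ u p (stdv (n+1) l) * hess u p (stdv (n+1) j) (stdv (n+1) l))
            + p i * hess u p (stdv (n+1) j) (stdv (n+1) l) ^ 2 := fun l => by ring
      rw [Finset.sum_congr rfl fun l _ => e1 l, Finset.sum_add_distrib,
        Finset.sum_add_distrib, ← Finset.mul_sum, ← Finset.mul_sum,
        aux_sum_mul_stdv (fun l => fderiv ℝ u p (stdv (n+1) j)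
          * hess u p (stdv (n+1) j) (stdv (n+1) l)) i]
    rw [Finset.sum_congr rfl fun j _ => inner_eq j, Finset.sum_add_distrib,
      Finset.sum_add_distrib, ← Finset.mul_sum,
      aux_stdv_mul_sum (fun j => ∑ l, fderiv ℝ u p (stdv (n+1) l)
        * hess u p (stdv (n+1) j) (stdv (n+1) l)) i]
    have t1 : ∑ j, fderiv ℝ u p (stdv (n+1) j)
        * hess u p (stdv (n+1) j) (stdv (n+1) i)
        = hess u p (gradient u p) (stdv (n+1) i) := by
      rw [aux_hess_sum_left u p (stdv (n+1) i) (gradient u p)]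
      exact Finset.sum_congr rfl fun j _ => by rw [hdj j]
    have t2 : ∑ l, fderiv ℝ u p (stdv (n+1) l)
        * hess u p (stdv (n+1) i) (stdv (n+1) l)
        = hess u p (stdv (n+1) i) (gradient u p) := by
      rw [aux_hess_sum_right u p (stdv (n+1) i) (gradient u p)]
      exact Finset.sum_congr rfl fun l _ => by rw [hdj l]
    rw [t1, t2, hesssym (stdv (n+1) i) (gradient u p)]
    ring
  -- squared norm of the perturbed gradient
  have hnorm : ∀ s : ℝ, ‖gradient u p + (s * u p) • stdv (n+1) i
      + (s * p i) • gradient u p‖ ^ 2 = ((‖gradient u p‖ ^ 2)) + s * (2 * (p i) * (‖gradient u p‖ ^ 2) + 2 * (u p) * (fderiv ℝ u p (stdv (n+1) i))) + s ^ 2 * ((p i) ^ 2 * (‖gradient u p‖ ^ 2) + 2 * (u p) * (p i) * (fderiv ℝ u p (stdv (n+1) i)) + (u p) ^ 2) := by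
    intro s
    rw [← real_inner_self_eq_norm_sq]
    simp only [inner_add_left, inner_add_right, real_inner_smul_left, real_inner_smul_right]
    simp only [hge, heg, hee1]
    simp only [real_inner_self_eq_norm_sq]
    ring
  -- the Hessian applied twice to the perturbed gradient
  have hhgg : ∀ s : ℝ, hess (fun z => u z + s * (z i * u z)) p
      (gradient u p + (s * u p) • stdv (n+1) i + (s * p i) • gradient u p)
      (gradient u p + (s * u p) • stdv (n+1) i + (s * p i) • gradient u p)
      = ((hess u p (gradient u p) (gradient u p))) + s * (2 * (‖gradient u p‖ ^ 2) * (fderiv ℝ u p (stdv (n+1) i)) + 3 * (p i) * (hess u p (gradient u p) (gradient u p)) + 2 * (u p) * (hess u p (gradient u p) (stdv (n+1) i))) + s ^ 2 * (4 * (p i) * (‖gradient u p‖ ^ 2) * (fderiv ℝ u p (stdv (n+1) i)) + 3 * (p i) ^ 2 * (hess u p (gradient u p) (gradient u p)) + 2 * (u p) * (fderiv ℝ u p (stdv (n+1) i)) ^ 2 + 2 * (u p) * (‖gradient u p‖ ^ 2) + 4 * (u p) * (p i) * (hess u p (gradient u p) (stdv (n+1) i)) + (u p) ^ 2 * (hess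 u p (stdv (n+1) i) (stdv (n+1) i))) + s ^ 3 * (2 * (p i) ^ 2 * (‖gradient u p‖ ^ 2) * (fderiv ℝ u p (stdv (n+1) i)) + (p i) ^ 3 * (hess u p (gradient u p) (gradient u p)) + 2 * (u p) * (p i) * (fderiv ℝ u p (stdv (n+1) i)) ^ 2 + 2 * (u p) * (p i) * (‖gradient u p‖ ^ 2) + 2 * (u p) * (p i) ^ 2 * (hess u p (gradient u p) (stdv (n+1) i)) + 2 * (u p) ^ 2 * (fderiv ℝ u p (stdv (n+1) i)) + (u p) ^ 2 * (p i) * (hess u p (stdv (n+1) i) (stdv (n+1) i))) := by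
    intro s
    rw [hh]
    simp only [aux_hess_add_left, aux_hess_add_right, aux_hess_smul_left, aux_hess_smul_right,
      _root_.map_add, _root_.map_smul, smul_eq_mul, PiLp.add_apply, PiLp.smul_apply]
    rw [hesssym (stdv (n+1) i) (gradient u p)]
    rw [hdg, hgi, hei]
    ring
  -- the function of `s` is an explicit cubic polynomial
  have hfun : (fun s : ℝ => L4 n (fun y => u y + s * (y i * u y)) p)
      = fun s : ℝ => ((1/4) * (hess u p (gradient u p) (gradient u p)) + (1/4) * (hess u p (gradient u p) (gradient u p)) * (n:ℝ) + (-1/4) * (lap u p) * (‖gradient u p‖ ^ 2) + (1/4) * (lap u p) * (‖gradient u p‖ ^ 2) * (n:ℝ) + (3/8) * (u p) * (hessNormSq u p) + (-1/8) * (u p) * (hessNormSq u p) * (n:ℝ) + (-3/8) * (u p) * (lap u p) ^ 2 + (1/8) * (u p) * (lap u p) ^ 2 * (n:ℝ)) + ((‖gradient u p‖ ^ 2) * (fderiv ℝ u p (stdv (n+1) i)) * (n:ℝ) + (3/4) * (p i) * (hess u p (gradient u p) (gradient u p)) + (3/4) * (p i) * (hess u p (gradient u p) (gradient u p)) * (n:ℝ)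 + (-3/4) * (p i) * (lap u p) * (‖gradient u p‖ ^ 2) + (3/4) * (p i) * (lap u p) * (‖gradient u p‖ ^ 2) * (n:ℝ) + 2 * (u p) * (hess u p (gradient u p) (stdv (n+1) i)) + -2 * (u p) * (lap u p) * (fderiv ℝ u p (stdv (n+1) i)) + (u p) * (lap u p) * (fderiv ℝ u p (stdv (n+1) i)) * (n:ℝ) + (9/8) * (u p) * (p i) * (hessNormSq u p) + (-3/8) * (u p) * (p i) * (hessNormSq u p) * (n:ℝ) + (-9/8) * (u p) * (p i) * (lap u p) ^ 2 + (3/8) * (u p) * (p i) * (lap u p) ^ 2 * (n:ℝ)) * s + (2 * (p i) * (‖gradient u p‖ ^ 2) * (fderiv ℝ u p (stdv (n+1) i)) * (n:ℝ) + (3/4) * (p i) ^ 2 * (hess u p (gradient u p) (gradient u p)) + (3/4) * (p i) ^ 2 * (hess u p (gradient u p) (gradient u p)) * (n:ℝ) + (-3/4) * (p i) ^ 2 * (lap u p) * (‖gradient u p‖ ^ 2) + (3/4) * (p i) ^ 2 * (lap u p) * (‖gradient u p‖ ^ 2) * (n:ℝ) + (3/8) * (u p) * (QWe n u p i) + (-1/8)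 * (u p) * (QWe n u p i) * (n:ℝ) + -2 * (u p) * (fderiv ℝ u p (stdv (n+1) i)) ^ 2 + 2 * (u p) * (fderiv ℝ u p (stdv (n+1) i)) ^ 2 * (n:ℝ) + (1/2) * (u p) * (‖gradient u p‖ ^ 2) + (1/2) * (u p) * (‖gradient u p‖ ^ 2) * (n:ℝ) + (5/2) * (u p) * (p i) * (hess u p (gradient u p) (stdv (n+1) i)) + (1/2) * (u p) * (p i) * (hess u p (gradient u p) (stdv (n+1) i)) * (n:ℝ) + -4 * (u p) * (p i) * (lap u p) * (fderiv ℝ u p (stdv (n+1) i)) + 2 * (u p) * (p i) * (lap u p) * (fderiv ℝ u p (stdv (n+1) i)) * (n:ℝ) + (3/4) * (u p) * (p i) ^ 2 * (hessNormSq u p) + (-1/4) * (u p) * (p i) ^ 2 * (hessNormSq u p) * (n:ℝ) + (-9/8) * (u p) * (p i) ^ 2 * (lap u p) ^ 2 + (3/8) * (u p) * (p i) ^ 2 * (lap u p) ^ 2 * (n:ℝ) + (1/4) * (u p) ^ 2 * (hess u p (stdv (n+1) i) (stdv (n+1) i)) + (1/4) * (u p) ^ 2 * (hess u p (stdv (n+1)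 i) (stdv (n+1) i)) * (n:ℝ) + (-1/4) * (u p) ^ 2 * (lap u p) + (1/4) * (u p) ^ 2 * (lap u p) * (n:ℝ)) * s ^ 2 + ((p i) ^ 2 * (‖gradient u p‖ ^ 2) * (fderiv ℝ u p (stdv (n+1) i)) * (n:ℝ) + (1/4) * (p i) ^ 3 * (hess u p (gradient u p) (gradient u p)) + (1/4) * (p i) ^ 3 * (hess u p (gradient u p) (gradient u p)) * (n:ℝ) + (-1/4) * (p i) ^ 3 * (lap u p) * (‖gradient u p‖ ^ 2) + (1/4) * (p i) ^ 3 * (lap u p) * (‖gradient u p‖ ^ 2) * (n:ℝ) + (3/8) * (u p) * (p i) * (QWe n u p i) + (-1/8) * (u p) * (p i) * (QWe n u p i) * (n:ℝ) + -2 * (u p) * (p i) * (fderiv ℝ u p (stdv (n+1) i)) ^ 2 + 2 * (u p) * (p i) * (fderiv ℝ u p (stdv (n+1) i)) ^ 2 * (n:ℝ) + (1/2) * (u p) * (p i) * (‖gradient u p‖ ^ 2) + (1/2) * (u p) * (p i) * (‖gradient u p‖ ^ 2) * (n:ℝ) + (1/2) * (u p) * (p i) ^ 2 * (hess u p (gradient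 u p) (stdv (n+1) i)) + (1/2) * (u p) * (p i) ^ 2 * (hess u p (gradient u p) (stdv (n+1) i)) * (n:ℝ) + -2 * (u p) * (p i) ^ 2 * (lap u p) * (fderiv ℝ u p (stdv (n+1) i)) + (u p) * (p i) ^ 2 * (lap u p) * (fderiv ℝ u p (stdv (n+1) i)) * (n:ℝ) + (-3/8) * (u p) * (p i) ^ 3 * (lap u p) ^ 2 + (1/8) * (u p) * (p i) ^ 3 * (lap u p) ^ 2 * (n:ℝ) + (u p) ^ 2 * (fderiv ℝ u p (stdv (n+1) i)) * (n:ℝ) + (1/4) * (u p) ^ 2 * (p i) * (hess u p (stdv (n+1) i) (stdv (n+1) i)) + (1/4) * (u p) ^ 2 * (p i) * (hess u p (stdv (n+1) i) (stdv (n+1) i)) * (n:ℝ) + (-1/4) * (u p) ^ 2 * (p i) * (lap u p) + (1/4) * (u p) ^ 2 * (p i) * (lap u p) * (n:ℝ)) * s ^ 3 := by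
    funext s
    simp only [L4, grad]
    rw [hgradeq s p hp, hlap s, hhns s, hnorm s, hhgg s]
    ring
  have hder : deriv (fun s : ℝ => L4 n (fun y => u y + s * (y i * u y)) p) 0 = ((‖gradient u p‖ ^ 2) * (fderiv ℝ u p (stdv (n+1) i)) * (n:ℝ) + (3/4) * (p i) * (hess u p (gradient u p) (gradient u p)) + (3/4) * (p i) * (hess u p (gradient u p) (gradient u p)) * (n:ℝ) + (-3/4) * (p i) * (lap u p) * (‖gradient u p‖ ^ 2) + (3/4) * (p i) * (lap u p) * (‖gradient u p‖ ^ 2) * (n:ℝ) + 2 * (u p) * (hess u p (gradient u p) (stdv (n+1) i)) + -2 * (u p) * (lap u p) * (fderiv ℝ u p (stdv (n+1) i)) + (u p) * (lap u p) * (fderiv ℝ u p (stdv (n+1) i)) * (n:ℝ) + (9/8) * (u p) * (p i) * (hessNormSq u p) + (-3/8) * (u p) * (p i) * (hessNormSq u p) * (n:ℝ) + (-9/8) * (u p) * (p i) * (lap u p) ^ 2 + (3/8) * (u p) * (p i) * (lap u p) ^ 2 * (n:ℝ)) := by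
    rw [hfun]; exact aux_deriv_cubic _ _ _ _
  -- gradient of the squared gradient norm
  have hgsq : ⟪stdv (n+1) i, gradient (fun y => ‖gradient u y‖ ^ 2) p⟫
      = 2 * hess u p (stdv (n+1) i) (gradient u p) := by
    rw [real_inner_comm, aux_inner_grad]
    have hrw : (fun y => ‖gradient u y‖ ^ 2)
        = fun y : Euc (n+1) => ⟪gradient u y, gradient u y⟫ :=
      funext fun y => (real_inner_self_eq_norm_sq _).symm
    rw [hrw]
    have hF : HasFDerivAt (fun y : Euc (n+1) => ⟪gradient u y, gradient u y⟫)
        ((fderivInnerCLM ℝ (gradient u p, gradient u p)).comp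
          ((fderiv ℝ (gradient u) p).prod (fderiv ℝ (gradient u) p))) p :=
      HasFDerivAt.inner ℝ hGdiff.hasFDerivAt hGdiff.hasFDerivAt
    rw [hF.fderiv]
    simp only [ContinuousLinearMap.coe_comp', Function.comp_apply,
      ContinuousLinearMap.prod_apply, fderivInnerCLM_apply]
    simp only [hess, hessVec]
    rw [real_inner_comm (gradient u p) ((fderiv ℝ (gradient u) p) (stdv (n+1) i))]
    ring
  have hne : ((n:ℝ) - 3) ≠ 0 := by
    have h4 : (4:ℝ) ≤ (n:ℝ) := by exact_mod_cast hn
    intro h; linarith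
  constructor
  · rw [hder]
    simp only [T1b, sigma1, L4]
    rw [show grad u p = gradient u p from rfl]
    rw [hge]
    simp only [real_inner_self_eq_norm_sq]
    field_simp
    ring
  · rw [hder]
    simp only [L4, grad]
    rw [hgsq, hesssym (stdv (n+1) i) (gradient u p), hge]
    ring
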